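/- arXiv:1506.06738 — 2 statements merged into one kernel-verified Lean document; each statement's English description precedes it below -/
import Mathlib

section
/- A 3×3 complex matrix A is unitary if and only if there exist angles α, β, γ ∈ [0, 2π] and complex numbers z, λ₁, λ₂, λ₃, λ₄, λ₅, each of modulus 1, such that A = diag(λ₁, λ₂, λ₃) · X_β · Y^z_α · X_γ · diag(1, λ₄, λ₅), where X_φ is the 3×3 matrix with rows (1,0,0), (0, cos φ, −sin φ), (0, sin φ, cos φ), and Y^z_φ is the 3×3 matrix with rows (cos φ, 0, −sin φ), (0, z, 0), (sin φ, 0, cos φ). -/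
open Real

/-- The rotation `X_φ` about the first coordinate axis. -/
noncomputable def Xrot (φ : ℝ) : Matrix (Fin 3) (Fin 3) ℂ :=
  !![1, 0, 0;
     0, (Real.cos φ : ℂ), (-(Real.sin φ) : ℝ);
     0, (Real.sin φ : ℂ), (Real.cos φ : ℂ)]

/-- The twisted rotation `Y^z_φ`. -/
noncomputable def Yrot (z : ℂ) (φ : ℝ) : Matrix (Fin 3) (Fin 3) ℂ :=
  !![(Real.cos φ : ℂ), 0, (-(Real.sin φ) : ℝ);
     0, z, 0;
     (Real.sin φ : ℂ), 0, (Real.cos φ : ℂ)]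

/-!
The first column of a unitary `A` is a unit vector; polar coordinates for its entries give
phases `l₁, l₂, l₃` and angles `α, β` such that `M = diag(l₁, l₂, l₃) · X_β · Y¹_α` has the same
first column. Then `M⋆ A` is unitary and fixes `e₀`, so it is `diag(1, V)` with `V ∈ U(2)`. Such a
`V` has the shape `[[a, -w c̄], [c, w ā]]` with `w = det V` unimodular, hence
`V = diag(z, 1) · R_γ · diag(l₄, l₅)` for a rotation `R_γ`. Finally `Y¹_α · diag(1, z, 1) = Yᶻ_α`.
-/

open Matrix ComplexConjugate

noncomputable def phase (x : ℂ) : ℂ := Complex.exp (x.arg * Complex.I)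

lemma norm_phase (x : ℂ) : ‖phase x‖ = 1 := Complex.norm_exp_ofReal_mul_I _

lemma norm_mul_phase (x : ℂ) : ‖x‖ * phase x = x := Complex.norm_mul_exp_arg_mul_I x

lemma mul_conj_of_norm_eq_one {z : ℂ} (h : ‖z‖ = 1) : z * conj z = 1 := by
  rw [Complex.mul_conj', h]; norm_num

lemma exists_angle_of_sq_add_sq {a b r : ℝ} (hb : 0 ≤ b) (hr : 0 ≤ r)
    (h : a ^ 2 + b ^ 2 = r ^ 2) : ∃ θ ∈ Set.Icc 0 (2 * π), a = r * cos θ ∧ b = r * sin θ := by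
  have hnorm : ‖(⟨a, b⟩ : ℂ)‖ = r := by
    rw [Complex.norm_eq_sqrt_sq_add_sq, h, Real.sqrt_sq hr]
  refine ⟨Complex.arg ⟨a, b⟩, ⟨Complex.arg_nonneg_iff.2 hb, ?_⟩, ?_, ?_⟩
  · linarith [Complex.arg_le_pi ⟨a, b⟩, Real.pi_pos]
  · rw [← hnorm, Complex.norm_mul_cos_arg]
  · rw [← hnorm, Complex.norm_mul_sin_arg]

namespace Matrix

variable {n : Type*} [Fintype n] [DecidableEq n]

lemma diagonal_mem_unitaryGroup {d : n → ℂ} (h : ∀ i, ‖d i‖ = 1) :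
    diagonal d ∈ unitaryGroup n ℂ := by
  rw [mem_unitaryGroup_iff, star_eq_conjTranspose, diagonal_conjTranspose, diagonal_mul_diagonal,
    ← diagonal_one]
  exact congrArg diagonal (funext fun i => mul_conj_of_norm_eq_one (h i))

lemma sum_norm_sq_col_eq_one_of_mem_unitaryGroup {A : Matrix n n ℂ}
    (hA : A ∈ unitaryGroup n ℂ) (j : n) : ∑ i, ‖A i j‖ ^ 2 = 1 := by
  have h := congr_fun₂ hA.1 j j
  simp only [mul_apply, star_apply, RCLike.star_def, Complex.conj_mul', one_apply_eq] at h
  exact_mod_cast h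

lemma row_eq_one_of_col_eq_one_of_mem_unitaryGroup {C : Matrix n n ℂ}
    (hC : C ∈ unitaryGroup n ℂ) {k : n} (h : ∀ i, C i k = (1 : Matrix n n ℂ) i k) (j : n) :
    C k j = (1 : Matrix n n ℂ) k j := by
  rw [← congr_fun₂ hC.1 k j, mul_apply]
  simp [star_apply, h, one_apply]

lemma adjugate_eq_det_smul_star_of_mem_unitaryGroup {C : Matrix n n ℂ}
    (hC : C ∈ unitaryGroup n ℂ) : adjugate C = C.det • star C := by
  calc adjugate C = star C * (C * adjugate C) := by rw [← Matrix.mul_assoc, hC.1, Matrix.one_mul]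
    _ = C.det • star C := by rw [mul_adjugate, Matrix.mul_smul, Matrix.mul_one]

end Matrix

lemma Xrot_mem_unitaryGroup (φ : ℝ) : Xrot φ ∈ unitaryGroup (Fin 3) ℂ := by
  rw [mem_unitaryGroup_iff]
  ext i j
  fin_cases i <;> fin_cases j <;>
    simp [Xrot, mul_apply, Fin.sum_univ_three, star_apply, one_apply, -Complex.ofReal_cos,
      -Complex.ofReal_sin, Complex.conj_ofReal] <;>
    norm_cast <;> ring_nf <;> simp

lemma Yrot_mem_unitaryGroup_iff {z : ℂ} (φ : ℝ) :
    Yrot z φ ∈ unitaryGroup (Fin 3) ℂ ↔ ‖z‖ = 1 := by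
  rw [mem_unitaryGroup_iff]
  constructor
  · intro h
    have h11 : z * conj z = 1 := by
      simpa [Yrot, mul_apply, Fin.sum_univ_three, star_apply] using congr_fun₂ h 1 1
    rw [Complex.mul_conj'] at h11
    exact (pow_eq_one_iff_of_nonneg (norm_nonneg z) two_ne_zero).1 (by exact_mod_cast h11)
  · intro hz
    ext i j
    fin_cases i <;> fin_cases j <;>
      simp [Yrot, mul_apply, Fin.sum_univ_three, star_apply, one_apply, -Complex.ofReal_cos,
        -Complex.ofReal_sin, Complex.conj_ofReal, mul_conj_of_norm_eq_one hz] <;>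
      norm_cast <;> ring_nf <;> simp

lemma Yrot_one_mul_diagonal (z : ℂ) (φ : ℝ) : Yrot 1 φ * diagonal ![1, z, 1] = Yrot z φ := by
  ext i j
  fin_cases i <;> fin_cases j <;> simp [Yrot]

lemma exists_diagonal_mul_Xrot_mul_Yrot_col_zero_eq {v : Fin 3 → ℂ}
    (hv : ∑ i, ‖v i‖ ^ 2 = 1) :
    ∃ α ∈ Set.Icc 0 (2 * π), ∃ β ∈ Set.Icc 0 (2 * π), ∃ l₁ l₂ l₃ : ℂ,
      ‖l₁‖ = 1 ∧ ‖l₂‖ = 1 ∧ ‖l₃‖ = 1 ∧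
      ∀ i, (diagonal ![l₁, l₂, l₃] * Xrot β * Yrot 1 α) i 0 = v i := by
  rw [Fin.sum_univ_three] at hv
  obtain ⟨s, hs0, hs⟩ : ∃ s : ℝ, 0 ≤ s ∧ s ^ 2 = ‖v 1‖ ^ 2 + ‖v 2‖ ^ 2 :=
    ⟨_, Real.sqrt_nonneg _, Real.sq_sqrt (by positivity)⟩
  obtain ⟨α, hα, h0, hsα⟩ := exists_angle_of_sq_add_sq hs0 zero_le_one
    (show ‖v 0‖ ^ 2 + s ^ 2 = 1 ^ 2 by linarith)
  obtain ⟨β, hβ, h2, h1⟩ := exists_angle_of_sq_add_sq (norm_nonneg (v 1)) hs0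
    (show ‖v 2‖ ^ 2 + ‖v 1‖ ^ 2 = s ^ 2 by linarith)
  rw [one_mul] at h0 hsα
  rw [hsα] at h1 h2
  refine ⟨α, hα, β, hβ, phase (v 0), -phase (v 1), phase (v 2), norm_phase _,
    by rw [norm_neg, norm_phase], norm_phase _, fun i => ?_⟩
  fin_cases i <;> simp [Xrot, Yrot, mul_apply, Fin.sum_univ_three, -Complex.ofReal_cos,
      -Complex.ofReal_sin]
  · conv_rhs => rw [← norm_mul_phase (v 0), h0]
    ring
  · conv_rhs => rw [← norm_mul_phase (v 1), h1]
    push_cast; ring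
  · conv_rhs => rw [← norm_mul_phase (v 2), h2]
    push_cast; ring

lemma exists_eq_diagonal_mul_Xrot_mul_diagonal_of_col_zero_eq_one
    {C : Matrix (Fin 3) (Fin 3) ℂ} (hC : C ∈ unitaryGroup (Fin 3) ℂ)
    (h0 : ∀ i, C i 0 = (1 : Matrix (Fin 3) (Fin 3) ℂ) i 0) :
    ∃ γ ∈ Set.Icc 0 (2 * π), ∃ z l₄ l₅ : ℂ, ‖z‖ = 1 ∧ ‖l₄‖ = 1 ∧ ‖l₅‖ = 1 ∧
      C = diagonal ![1, z, 1] * Xrot γ * diagonal ![1, l₄, l₅] := by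
  have hrow := row_eq_one_of_col_eq_one_of_mem_unitaryGroup hC h0
  have hadj := adjugate_eq_det_smul_star_of_mem_unitaryGroup hC
  have hd : C 2 2 = C.det * conj (C 1 1) := by
    simpa [adjugate_fin_three, hrow, h0, star_apply] using congr_fun₂ hadj 1 1
  have hb : -C 1 2 = C.det * conj (C 2 1) := by
    simpa [adjugate_fin_three, hrow, h0, star_apply] using congr_fun₂ hadj 1 2
  have hcol : ‖C 1 1‖ ^ 2 + ‖C 2 1‖ ^ 2 = 1 := by
    simpa [Fin.sum_univ_three, hrow] using sum_norm_sq_col_eq_one_of_mem_unitaryGroup hC 1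
  obtain ⟨γ, hγ, hcos, hsin⟩ := exists_angle_of_sq_add_sq (norm_nonneg (C 2 1)) zero_le_one
    (show ‖C 1 1‖ ^ 2 + ‖C 2 1‖ ^ 2 = 1 ^ 2 by rwa [one_pow])
  rw [one_mul] at hcos hsin
  have hw : ‖C.det‖ = 1 := CStarRing.norm_of_mem_unitary (det_of_mem_unitary hC)
  have hua := mul_conj_of_norm_eq_one (norm_phase (C 1 1))
  have huc := mul_conj_of_norm_eq_one (norm_phase (C 2 1))
  have hpa := norm_mul_phase (C 1 1)
  have hpc := norm_mul_phase (C 2 1)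
  have hpa' := congrArg conj hpa
  have hpc' := congrArg conj hpc
  simp only [map_mul, Complex.conj_ofReal] at hpa' hpc'
  refine ⟨γ, hγ, phase (C 1 1) * conj (phase (C 2 1)), phase (C 2 1),
    C.det * conj (phase (C 1 1)), by simp [norm_phase], norm_phase _, by simp [norm_phase, hw], ?_⟩
  ext i j
  fin_cases i <;> fin_cases j <;> simp [Xrot, mul_apply, Fin.sum_univ_three, hrow, h0,
    -Complex.ofReal_cos, -Complex.ofReal_sin, ← hcos, ← hsin]
  · linear_combination -hpa - (‖C 1 1‖ : ℂ) * phase (C 1 1) * huc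
  · linear_combination -hb + C.det * hpc' + C.det * ‖C 2 1‖ * conj (phase (C 2 1)) * hua
  · exact hpc.symm
  · linear_combination hd - C.det * hpa'

/-- Euler-type parametrization of `U(3)`: `A` is unitary iff
`A = diag(λ₁,λ₂,λ₃) · X_β · Y^z_α · X_γ · diag(1,λ₄,λ₅)` with angles in `[0,2π]`
and unimodular `z, λ₁, …, λ₅`. -/
theorem u3_euler_parametrization (A : Matrix (Fin 3) (Fin 3) ℂ) :
    A ∈ Matrix.unitaryGroup (Fin 3) ℂ ↔
      ∃ α β γ : ℝ, α ∈ Set.Icc 0 (2 * π) ∧ β ∈ Set.Icc 0 (2 * π) ∧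
        γ ∈ Set.Icc 0 (2 * π) ∧
      ∃ z l₁ l₂ l₃ l₄ l₅ : ℂ, ‖z‖ = 1 ∧ ‖l₁‖ = 1 ∧
        ‖l₂‖ = 1 ∧ ‖l₃‖ = 1 ∧ ‖l₄‖ = 1 ∧
        ‖l₅‖ = 1 ∧
        A = Matrix.diagonal ![l₁, l₂, l₃] * Xrot β * Yrot z α * Xrot γ *
              Matrix.diagonal ![1, l₄, l₅] := by
  constructor
  · intro hA
    obtain ⟨α, hα, β, hβ, l₁, l₂, l₃, h₁, h₂, h₃, hcol⟩ :=
      exists_diagonal_mul_Xrot_mul_Yrot_col_zero_eq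
        (sum_norm_sq_col_eq_one_of_mem_unitaryGroup hA 0)
    set M := diagonal ![l₁, l₂, l₃] * Xrot β * Yrot 1 α
    have hM : M ∈ unitaryGroup (Fin 3) ℂ :=
      mul_mem (mul_mem (diagonal_mem_unitaryGroup (by simp [Fin.forall_fin_succ, h₁, h₂, h₃]))
        (Xrot_mem_unitaryGroup β)) ((Yrot_mem_unitaryGroup_iff α).2 norm_one)
    obtain ⟨γ, hγ, z, l₄, l₅, hz, h₄, h₅, hC⟩ :=
      exists_eq_diagonal_mul_Xrot_mul_diagonal_of_col_zero_eq_one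
        (mul_mem (Unitary.star_mem hM) hA) fun i => by simp only [← hM.1, mul_apply, hcol]
    refine ⟨α, β, γ, hα, hβ, hγ, z, l₁, l₂, l₃, l₄, l₅, hz, h₁, h₂, h₃, h₄, h₅, ?_⟩
    calc A = M * (star M * A) := by rw [← Matrix.mul_assoc, hM.2, Matrix.one_mul]
      _ = _ := by rw [hC, ← Yrot_one_mul_diagonal]; simp only [M, Matrix.mul_assoc]
  · rintro ⟨α, β, γ, -, -, -, z, l₁, l₂, l₃, l₄, l₅, hz, h₁, h₂, h₃, h₄, h₅, rfl⟩
    exact mul_mem (mul_mem (mul_mem (mul_mem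
      (diagonal_mem_unitaryGroup (by simp [Fin.forall_fin_succ, h₁, h₂, h₃]))
      (Xrot_mem_unitaryGroup β)) ((Yrot_mem_unitaryGroup_iff α).2 hz)) (Xrot_mem_unitaryGroup γ))
      (diagonal_mem_unitaryGroup (by simp [Fin.forall_fin_succ, h₄, h₅]))
end

section
/- Fix a real number α < 1. Suppose that for every n ≥ 1 and every n×n unitary matrix A over ℂ there exists a vector v ∈ ℂⁿ with all entries of modulus 1 such that ∑_k |(Av)_k| ≥ n − n^α. Then for every n ≥ 1, every n×n unitary matrix over ℂ has a biunimodular vector. -/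
/-- A vector `v` is biunimodular for `A` if every entry of `v` and of `A.mulVec v`
has modulus 1. -/
def IsBiunimodular {n : ℕ} (A : Matrix (Fin n) (Fin n) ℂ) (v : Fin n → ℂ) : Prop :=
  (∀ k, ‖v k‖ = 1) ∧ ∀ k, ‖A.mulVec v k‖ = 1

/-!
Let `S` be the maximum of `‖Av‖₁` over unimodular `v`. On the block-diagonal matrix `A ⊗ I_m` every
unimodular vector has `ℓ¹`-image at most `m S`, so the hypothesis gives `nm - (nm)^α ≤ m S`,
i.e. `m (n - S) ≤ n^α m^α` for all `m`; as `α < 1` this forces `S ≥ n`. For a maximiser `v₀`,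
`Av₀` has `ℓ²`-norm squared `n` and `ℓ¹`-norm at least `n`, so `∑ (|(Av₀)ₖ| - 1)² ≤ 0` and all its
entries have modulus 1.
-/

open Matrix Finset Filter Topology
open scoped Kronecker

theorem Matrix.reindex_mem_unitaryGroup {m n α : Type*} [Fintype m] [Fintype n] [DecidableEq m]
    [DecidableEq n] [CommRing α] [StarRing α] (e : m ≃ n) {A : Matrix m m α}
    (hA : A ∈ unitaryGroup m α) : reindex e e A ∈ unitaryGroup n α := by
  rw [mem_unitaryGroup_iff', star_eq_conjTranspose, conjTranspose_reindex, reindex_apply,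
    reindex_apply, submatrix_mul_equiv, ← star_eq_conjTranspose, hA.1, submatrix_one_equiv]

theorem Matrix.sum_norm_sq_mulVec_of_mem_unitaryGroup {𝕜 ι : Type*} [RCLike 𝕜] [Fintype ι]
    [DecidableEq ι] {A : Matrix ι ι 𝕜} (hA : A ∈ unitaryGroup ι 𝕜) (v : ι → 𝕜) :
    ∑ k, ‖(A *ᵥ v) k‖ ^ 2 = ∑ k, ‖v k‖ ^ 2 := by
  have hnorm := ContinuousLinearMap.norm_map_of_mem_unitary
    (Unitary.map_mem (toEuclideanCLM (𝕜 := 𝕜)) hA) (WithLp.toLp 2 v)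
  rw [← sq_eq_sq₀ (norm_nonneg _) (norm_nonneg _), EuclideanSpace.norm_sq_eq,
    EuclideanSpace.norm_sq_eq] at hnorm
  simpa using hnorm

theorem Matrix.kronecker_one_mulVec_apply {ι κ R : Type*} [Fintype ι] [Fintype κ] [DecidableEq κ]
    [Semiring R] (A : Matrix ι ι R) (w : ι × κ → R) (i : ι) (j : κ) :
    ((A ⊗ₖ (1 : Matrix κ κ R)) *ᵥ w) (i, j) = (A *ᵥ fun i' => w (i', j)) i := by
  simp [mulVec, dotProduct, Fintype.sum_prod_type, one_apply]

theorem Matrix.sum_norm_reindex_mulVec {ι κ R : Type*} [Fintype ι] [Fintype κ]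
    [SeminormedRing R] (e : ι ≃ κ) (A : Matrix ι ι R) (v : κ → R) :
    ∑ k, ‖(reindex e e A *ᵥ v) k‖ = ∑ i, ‖(A *ᵥ (v ∘ e)) i‖ := by
  rw [reindex_apply, submatrix_mulVec_equiv, Equiv.symm_symm]
  exact e.symm.sum_comp fun i => ‖(A *ᵥ (v ∘ e)) i‖

theorem Matrix.sum_norm_kronecker_one_mulVec_le {ι κ R : Type*} [Fintype ι] [Fintype κ]
    [DecidableEq κ] [SeminormedRing R] {A : Matrix ι ι R} {S : ℝ}
    (hS : ∀ v : ι → R, (∀ i, ‖v i‖ = 1) → ∑ i, ‖(A *ᵥ v) i‖ ≤ S)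
    {w : ι × κ → R} (hw : ∀ p, ‖w p‖ = 1) :
    ∑ p, ‖((A ⊗ₖ (1 : Matrix κ κ R)) *ᵥ w) p‖ ≤ Fintype.card κ * S := by
  calc ∑ p, ‖((A ⊗ₖ (1 : Matrix κ κ R)) *ᵥ w) p‖
      = ∑ j, ∑ i, ‖(A *ᵥ fun i' => w (i', j)) i‖ := by
        simp only [Fintype.sum_prod_type_right, kronecker_one_mulVec_apply]
    _ ≤ ∑ _j : κ, S := sum_le_sum fun j _ => hS _ fun i => hw (i, j)
    _ = Fintype.card κ * S := by simp

theorem isCompact_unimodular (ι E : Type*) [Finite ι] [SeminormedAddCommGroup E] [ProperSpace E] :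
    IsCompact {v : ι → E | ∀ i, ‖v i‖ = 1} := by
  simpa [Set.pi, mem_sphere_zero_iff_norm] using
    isCompact_univ_pi fun _ : ι => isCompact_sphere (0 : E) 1

theorem Matrix.exists_unimodular_forall_sum_norm_mulVec_le {𝕜 ι : Type*} [RCLike 𝕜] [Fintype ι]
    (A : Matrix ι ι 𝕜) : ∃ v₀ : ι → 𝕜, (∀ i, ‖v₀ i‖ = 1) ∧
      ∀ v : ι → 𝕜, (∀ i, ‖v i‖ = 1) → ∑ i, ‖(A *ᵥ v) i‖ ≤ ∑ i, ‖(A *ᵥ v₀) i‖ :=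
  (isCompact_unimodular ι 𝕜).exists_isMaxOn ⟨1, fun _ => norm_one⟩
    (by fun_prop : Continuous fun v : ι → 𝕜 => ∑ i, ‖(A *ᵥ v) i‖).continuousOn

theorem nonpos_of_forall_nat_mul_le_mul_rpow {α c C : ℝ} (hα : α < 1)
    (h : ∀ m : ℕ, 1 ≤ m → m * c ≤ C * (m : ℝ) ^ α) : c ≤ 0 := by
  have hlim : Tendsto (fun m : ℕ => C * (m : ℝ) ^ (α - 1)) atTop (𝓝 0) := by
    simpa using ((tendsto_rpow_neg_atTop (by linarith : 0 < 1 - α)).comp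
      tendsto_natCast_atTop_atTop).const_mul C
  refine ge_of_tendsto hlim (eventually_atTop.2 ⟨1, fun m hm => ?_⟩)
  have hm0 : (0 : ℝ) < m := by exact_mod_cast hm
  rw [Real.rpow_sub_one hm0.ne', mul_div_assoc', le_div_iff₀ hm0, mul_comm c]
  exact h m hm

theorem eq_one_of_sum_sq_le_card_of_card_le_sum {ι : Type*} [Fintype ι] {x : ι → ℝ}
    (hsq : ∑ i, x i ^ 2 ≤ Fintype.card ι) (hsum : Fintype.card ι ≤ ∑ i, x i) (i : ι) :
    x i = 1 := by
  have hexpand : ∑ i, (x i - 1) ^ 2 = ∑ i, x i ^ 2 - 2 * ∑ i, x i + Fintype.card ι := by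
    simp only [sub_sq, sum_add_distrib, sum_sub_distrib, mul_sum]
    simp
  have hzero : ∑ i, (x i - 1) ^ 2 = 0 :=
    le_antisymm (by linarith) (sum_nonneg fun i _ => sq_nonneg _)
  have hsq_zero := (sum_eq_zero_iff_of_nonneg fun i _ => sq_nonneg (x i - 1)).1 hzero i (mem_univ i)
  exact sub_eq_zero.1 (pow_eq_zero_iff two_ne_zero |>.1 hsq_zero)

theorem card_le_of_near_extremal {α : ℝ} (hα : α < 1)
    (h : ∀ n : ℕ, 1 ≤ n → ∀ A ∈ Matrix.unitaryGroup (Fin n) ℂ,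
      ∃ v : Fin n → ℂ, (∀ k, ‖v k‖ = 1) ∧
        (n : ℝ) - (n : ℝ) ^ α ≤ ∑ k, ‖A.mulVec v k‖)
    {n : ℕ} (hn : 1 ≤ n) {A : Matrix (Fin n) (Fin n) ℂ} (hA : A ∈ unitaryGroup (Fin n) ℂ) {S : ℝ}
    (hS : ∀ v : Fin n → ℂ, (∀ i, ‖v i‖ = 1) → ∑ i, ‖(A *ᵥ v) i‖ ≤ S) :
    (n : ℝ) ≤ S := by
  refine sub_nonpos.1 (nonpos_of_forall_nat_mul_le_mul_rpow (C := (n : ℝ) ^ α) hα fun m hm => ?_)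
  have hB := reindex_mem_unitaryGroup finProdFinEquiv
    (kronecker_mem_unitary hA (one_mem (unitaryGroup (Fin m) ℂ)))
  obtain ⟨v, hv, hlow⟩ := h (n * m) (Nat.mul_pos hn hm) _ hB
  have hup := sum_norm_kronecker_one_mulVec_le (κ := Fin m) hS (w := v ∘ finProdFinEquiv)
    fun p => hv _
  rw [← sum_norm_reindex_mulVec, Fintype.card_fin] at hup
  push_cast at hlow
  rw [Real.mul_rpow (Nat.cast_nonneg n) (Nat.cast_nonneg m)] at hlow
  linarith

/-- If, for some fixed `α < 1`, every unitary matrix of every size `n ≥ 1` admits a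
unimodular vector `v` with `‖Av‖₁ ≥ n − n^α`, then every unitary matrix has a
biunimodular vector. -/
theorem biunimodular_of_near_extremal (α : ℝ) (hα : α < 1)
    (h : ∀ n : ℕ, 1 ≤ n → ∀ A ∈ Matrix.unitaryGroup (Fin n) ℂ,
      ∃ v : Fin n → ℂ, (∀ k, ‖v k‖ = 1) ∧
        (n : ℝ) - (n : ℝ) ^ α ≤ ∑ k, ‖A.mulVec v k‖) :
    ∀ n : ℕ, 1 ≤ n → ∀ A ∈ Matrix.unitaryGroup (Fin n) ℂ,
      ∃ v : Fin n → ℂ, IsBiunimodular A v := by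
  intro n hn A hA
  obtain ⟨v₀, hv₀, hmax⟩ := exists_unimodular_forall_sum_norm_mulVec_le A
  refine ⟨v₀, hv₀, eq_one_of_sum_sq_le_card_of_card_le_sum (x := fun k => ‖(A *ᵥ v₀) k‖) ?_ ?_⟩
  · simp [sum_norm_sq_mulVec_of_mem_unitaryGroup hA, hv₀]
  · simpa using card_le_of_near_extremal hα h hn hA hmax
end
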